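/- arXiv:1803.10706 — 3 statements merged into one kernel-verified Lean document; each statement's English description precedes it below -/
import Mathlib

section
/- Let l and m be natural numbers with m ≤ l and l−m even. Then for every real x with x² ≠ 1, 𝒫_{l−m}(x,l) = N_l^m · 𝒫_l^m(x), where N_l^m = (−1)^m · binom(l, (l−m)/2) · (l−m)!!·(l−m)!/(l+m−1)!! (with the convention (−1)!! = 1) and 𝒫_l^m(x) = (−1)^m · (d^m/dx^m) P_l(x) is the polynomial part of the associated Legendre function. -/
/-- Complementary Legendre polynomial
`𝒫_ν(x,l) = (1-x²)^(ν-l) · (dᵛ/dtᵛ)(1-t²)^l |_{t=x}` (zpow power). -/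
noncomputable def complLegendre (l ν : ℕ) (x : ℝ) : ℝ :=
  (1 - x ^ 2) ^ ((ν : ℤ) - (l : ℤ)) *
    iteratedDeriv ν (fun t : ℝ => (1 - t ^ 2) ^ l) x

/-- Legendre polynomial via Rodrigues' formula. -/
noncomputable def legendreP (l : ℕ) (x : ℝ) : ℝ :=
  (1 / (2 ^ l * (Nat.factorial l : ℝ))) *
    iteratedDeriv l (fun t : ℝ => (t ^ 2 - 1) ^ l) x

/-- Polynomial part of the associated Legendre function:
`𝒫_l^m(x) = (-1)^m (d^m/dx^m) P_l(x)`. -/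
noncomputable def assocLegendreP (l m : ℕ) (x : ℝ) : ℝ :=
  (-1) ^ m * iteratedDeriv m (legendreP l) x

/-- Normalization `N_l^m` (here `(l+m-1)` is natural subtraction, so that for
`l = m = 0` the denominator is `0‼ = 1`, matching the convention `(-1)‼ = 1`). -/
noncomputable def legendreNorm (l m : ℕ) : ℝ :=
  (-1) ^ m * (Nat.choose l ((l - m) / 2) : ℝ) *
    ((Nat.doubleFactorial (l - m) : ℝ) * (Nat.factorial (l - m) : ℝ))
      / (Nat.doubleFactorial (l + m - 1) : ℝ)


/-!
Write `u_ν = D^ν (1 - x²)^l`. Differentiating `(1 - x²) u₀' = -2l x u₀` gives a three-term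
recurrence for the `u_ν`, from which the classical identity
`(l + m)! u_{l-m} = (-1)^m (l - m)! (1 - x²)^m u_{l+m}` follows by induction on `m`: both sides
have the same derivative and vanish at `x = 1`, where `(1 - x²)^(l-ν)` divides `u_ν`.
As `D^m P_l = (-1)^l u_{l+m} / (2^l l!)`, the theorem reduces to
`N_l^m = (-1)^l 2^l l! (l - m)! / (l + m)!`, which follows from `(l + m)! = (l + m)‼ (l + m - 1)‼`
and `(2j)‼ = 2^j j!` since `l ± m` are even.
-/

open Polynomial Nat

namespace Polynomial

theorem iteratedDeriv_eval {𝕜 : Type*} [NontriviallyNormedField 𝕜] (p : 𝕜[X]) (n : ℕ) (x : 𝕜) :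
    iteratedDeriv n (fun x => p.eval x) x = (derivative^[n] p).eval x := by
  induction n generalizing p with
  | zero => simp
  | succ n ih =>
    rw [iteratedDeriv_succ', Function.iterate_succ_apply, ← ih]
    congr 1
    funext y
    exact Polynomial.deriv p

variable {R : Type*} [CommRing R]

theorem eq_of_derivative_eq_of_eval_eq [IsAddTorsionFree R] {p q : R[X]} (a : R)
    (hd : derivative p = derivative q) (ha : p.eval a = q.eval a) : p = q := by
  have hc := eq_C_of_derivative_eq_zero (p := p - q) (by rw [derivative_sub, hd, sub_self])
  have h0 : (p - q).coeff 0 = 0 := by simpa [ha] using (congrArg (eval a) hc).symm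
  rw [← sub_eq_zero, hc, h0, map_zero]

theorem one_sub_X_sq_mul_derivative_pow (l : ℕ) :
    (1 - X ^ 2) * derivative ((1 - X ^ 2 : R[X]) ^ l) = -2 * (l : R[X]) * X * (1 - X ^ 2) ^ l := by
  cases l with
  | zero => simp
  | succ l =>
    rw [derivative_pow, derivative_sub, derivative_one, derivative_X_sq, map_ofNat, map_natCast]
    push_cast
    ring

theorem one_sub_X_sq_mul_iterate_derivative_pow (l n : ℕ) :
    (1 - X ^ 2) * derivative^[n + 2] ((1 - X ^ 2 : R[X]) ^ l) =
      2 * ((n : R[X]) + 1 - (l : R[X])) * X * derivative^[n + 1] ((1 - X ^ 2) ^ l) +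
        ((n : R[X]) + 1) * ((n : R[X]) - 2 * (l : R[X])) * derivative^[n] ((1 - X ^ 2) ^ l) := by
  induction n with
  | zero =>
    have h := congrArg derivative (one_sub_X_sq_mul_derivative_pow (R := R) l)
    simp only [derivative_mul, derivative_sub, derivative_one, derivative_X_sq, derivative_X,
      derivative_neg, derivative_ofNat, derivative_natCast, map_ofNat] at h
    simp only [Function.iterate_succ_apply', Function.iterate_zero_apply, Nat.cast_zero]
    linear_combination h
  | succ n ih =>
    have h := congrArg derivative ih
    simp only [derivative_mul, derivative_sub, derivative_add, derivative_one, derivative_X_sq,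
      derivative_X, derivative_ofNat, derivative_natCast, map_ofNat,
      ← Function.iterate_succ_apply' derivative] at h
    push_cast
    linear_combination h

theorem eval_one_iterate_derivative_one_sub_X_sq_pow {n l : ℕ} (h : n < l) :
    (derivative^[n] ((1 - X ^ 2 : R[X]) ^ l)).eval 1 = 0 := by
  obtain ⟨q, hq⟩ := pow_sub_dvd_iterate_derivative_pow (1 - X ^ 2 : R[X]) l n
  rw [hq]
  simp [Nat.sub_ne_zero_of_lt h]

theorem factorial_mul_iterate_derivative_one_sub_X_sq_pow [IsAddTorsionFree R] {k m l : ℕ}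
    (h : k + m = l) :
    ((l + m)! : R[X]) * derivative^[k] ((1 - X ^ 2) ^ l) =
      (-1) ^ m * (k ! : R[X]) * (1 - X ^ 2) ^ m * derivative^[l + m] ((1 - X ^ 2) ^ l) := by
  induction m generalizing k with
  | zero => subst h; simp
  | succ m ih =>
    have ih := ih (k := k + 1) (by omega)
    have ode := one_sub_X_sq_mul_iterate_derivative_pow (R := R) l (l + m)
    have hl : (l : R[X]) = k + m + 1 := by rw [← h]; push_cast; ring
    apply eq_of_derivative_eq_of_eval_eq 1
    · rw [derivative_natCast_mul, ← Function.iterate_succ_apply' derivative, ← add_assoc]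
      simp only [derivative_mul, derivative_pow, derivative_neg, derivative_one, derivative_natCast,
        derivative_sub, derivative_X, map_natCast, ← Function.iterate_succ_apply' derivative]
      push_cast [Nat.factorial_succ] at ih ode ⊢
      linear_combination ((l : R[X]) + m + 1) * ih + (-1) ^ m * (k ! : R[X]) * (1 - X ^ 2) ^ m * ode
        - (-1) ^ m * (k ! : R[X]) * (1 - X ^ 2) ^ m * ((l : R[X]) + m + 1)
          * derivative^[l + m] ((1 - X ^ 2) ^ l) * hl
    · simp [eval_one_iterate_derivative_one_sub_X_sq_pow (show k < l by omega)]

end Polynomial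

theorem Nat.factorial_eq_doubleFactorial_mul_doubleFactorial_sub_one (n : ℕ) :
    n ! = n‼ * (n - 1)‼ := by
  cases n with
  | zero => rfl
  | succ n => exact Nat.factorial_eq_mul_doubleFactorial n

theorem legendreNorm_eq {l m : ℕ} (hm : m ≤ l) (he : Even (l - m)) :
    legendreNorm l m = (-1) ^ l * 2 ^ l * l ! * (l - m)! / (l + m)! := by
  obtain ⟨k, hk⟩ := he
  have hkl : k ≤ l := by omega
  have hsign : (-1 : ℝ) ^ m = (-1) ^ l := by
    rw [show l = m + 2 * k by omega, pow_add, pow_mul, neg_one_sq, one_pow, mul_one]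
  have hsub : (l - m)‼ = 2 ^ k * k ! := by
    rw [hk, ← two_mul, Nat.doubleFactorial_two_mul]
  have hadd : (l + m)! = 2 ^ (l - k) * (l - k)! * (l + m - 1)‼ := by
    rw [Nat.factorial_eq_doubleFactorial_mul_doubleFactorial_sub_one,
      show l + m = 2 * (l - k) by omega, Nat.doubleFactorial_two_mul]
  have hchoose := Nat.choose_mul_factorial_mul_factorial hkl
  have hpow : (2 : ℝ) ^ k * 2 ^ (l - k) = 2 ^ l := by rw [← pow_add, Nat.add_sub_cancel' hkl]
  rw [legendreNorm, show (l - m) / 2 = k by omega, hsub, hsign,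
    div_eq_div_iff (by positivity) (by positivity)]
  rw [← hchoose, ← hpow, hadd]
  push_cast
  ring

theorem complLegendre_eq_eval (l ν : ℕ) (x : ℝ) :
    complLegendre l ν x =
      (1 - x ^ 2) ^ ((ν : ℤ) - l) * (derivative^[ν] ((1 - X ^ 2 : ℝ[X]) ^ l)).eval x := by
  have hP : (fun t : ℝ => (1 - t ^ 2) ^ l) = fun t => ((1 - X ^ 2 : ℝ[X]) ^ l).eval t := by
    simp
  rw [complLegendre, hP, iteratedDeriv_eval]

theorem legendreP_eq_eval (l : ℕ) :
    legendreP l = fun x =>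
      (C ((-1 : ℝ) ^ l / (2 ^ l * l !)) * derivative^[l] ((1 - X ^ 2 : ℝ[X]) ^ l)).eval x := by
  have hP : (fun t : ℝ => (t ^ 2 - 1) ^ l) =
      fun t => (C ((-1 : ℝ) ^ l) * (1 - X ^ 2 : ℝ[X]) ^ l).eval t := by
    funext t
    simp only [eval_mul, eval_C, eval_pow, eval_sub, eval_one, eval_X]
    rw [← mul_pow, neg_one_mul, neg_sub]
  funext x
  rw [legendreP, hP, iteratedDeriv_eval, iterate_derivative_C_mul, eval_mul, eval_C, eval_mul,
    eval_C]
  ring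

theorem iteratedDeriv_legendreP (l m : ℕ) (x : ℝ) :
    iteratedDeriv m (legendreP l) x =
      (-1) ^ l / (2 ^ l * l !) * (derivative^[l + m] ((1 - X ^ 2 : ℝ[X]) ^ l)).eval x := by
  rw [legendreP_eq_eval, iteratedDeriv_eval, iterate_derivative_C_mul, ← Function.iterate_add_apply,
    eval_mul, eval_C, add_comm]

theorem complLegendre_normalization_even (l m : ℕ) (hm : m ≤ l) (he : Even (l - m))
    (x : ℝ) (hx : x ^ 2 ≠ 1) :
    complLegendre l (l - m) x = legendreNorm l m * assocLegendreP l m x := by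
  have h1x : (1 : ℝ) - x ^ 2 ≠ 0 := sub_ne_zero.mpr hx.symm
  have key := congrArg (eval x)
    (factorial_mul_iterate_derivative_one_sub_X_sq_pow (R := ℝ) (Nat.sub_add_cancel hm))
  simp only [eval_mul, eval_natCast, eval_pow, eval_neg, eval_one, eval_sub, eval_X] at key
  have hsq : (-1 : ℝ) ^ l * (-1) ^ l = 1 := by rw [← mul_pow]; norm_num
  rw [complLegendre_eq_eval, assocLegendreP, iteratedDeriv_legendreP, legendreNorm_eq hm he,
    show ((l - m : ℕ) : ℤ) - l = -m by omega, zpow_neg, zpow_natCast]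
  field_simp
  linear_combination key - ((l - m)! * (-1) ^ m * (1 - x ^ 2) ^ m *
    (derivative^[l + m] ((1 - X ^ 2 : ℝ[X]) ^ l)).eval x) * hsq
end

section
/- Fix a real parameter c. For all natural numbers l₁, l₂, every natural number ν, and all reals x₁ > 0, x₂ > 0, the complementary polynomials of the confluent hypergeometric equation satisfy the full addition law 𝒫_ν(x₁+x₂, l₁+l₂) = Σ_{ν₁,ν₂ ≥ 0, ν₁+ν₂ ≤ ν} C(1−c, ν−ν₁−ν₂)·(ν!/(ν₁!·ν₂!))·𝒫_{ν₁}(x₁,l₁)·𝒫_{ν₂}(x₂,l₂), where C(r,k) = (∏_{i=0}^{k−1}(r−i))/k! is the generalized binomial coefficient. -/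
/-- Complementary polynomial of the confluent hypergeometric equation:
`𝒫_ν(x,l) = x^(1-c+ν-l) · e^x · (dᵛ/dtᵛ)(t^(c-1+l) e^(-t)) |_{t=x}` (rpow powers). -/
noncomputable def complConfluent (c : ℝ) (l ν : ℕ) (x : ℝ) : ℝ :=
  x ^ (1 - c + (ν : ℝ) - (l : ℝ)) * Real.exp x *
    iteratedDeriv ν (fun t : ℝ => t ^ (c - 1 + (l : ℝ)) * Real.exp (-t)) x

/-- Generalized binomial coefficient `C(r,k) = (∏_{i<k} (r-i)) / k!`. -/
noncomputable def genBinom (r : ℝ) (k : ℕ) : ℝ :=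
  (∏ i ∈ Finset.range k, (r - (i : ℝ))) / (Nat.factorial k : ℝ)

/-!
By the Leibniz rule, `𝒫_ν(x,l) = ∑ₖ C(ν,k) (a)ₖ (-x)^(ν-k)` with `a = c - 1 + l` and `(a)ₖ` the
falling factorial, so the exponential generating function `∑_ν 𝒫_ν(x,l) tᵛ/ν!` is the formal
power series `(1+t)^a e^(-xt)`. Since `c - 1 + l₁ + l₂ = (c - 1 + l₁) + (c - 1 + l₂) + (1 - c)`,
the generating function for `(x₁ + x₂, l₁ + l₂)` is the product of those for `(x₁, l₁)` and
`(x₂, l₂)` with `(1+t)^(1-c)`; comparing coefficients of `tᵛ` gives the addition law.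
-/

open Finset PowerSeries
open scoped Nat

lemma Ring.choose_eq_descPochhammer_eval_div {K : Type*} [Field K] [CharZero K] (r : K) (k : ℕ) :
    Ring.choose r k = (descPochhammer K k).eval r / k ! := by
  rw [Ring.choose_eq_smul, ← Polynomial.aeval_eq_smeval, Polynomial.aeval_def,
    Polynomial.eval₂_eq_eval_map, descPochhammer_map, smul_eq_mul, inv_mul_eq_div]

lemma genBinom_eq_choose (r : ℝ) (k : ℕ) : genBinom r k = Ring.choose r k := by
  rw [Ring.choose_eq_descPochhammer_eval_div, descPochhammer_eval_eq_prod_range, genBinom]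

lemma Real.iteratedDeriv_exp_neg (n : ℕ) (x : ℝ) :
    iteratedDeriv n (fun t => Real.exp (-t)) x = (-1) ^ n * Real.exp (-x) := by
  simpa using congrFun (iteratedDeriv_exp_const_mul n (-1)) x

lemma Real.iteratedDeriv_rpow_mul_exp_neg (a : ℝ) (n : ℕ) {x : ℝ} (hx : 0 < x) :
    iteratedDeriv n (fun t => t ^ a * Real.exp (-t)) x =
      ∑ i ∈ range (n + 1), n.choose i * ((descPochhammer ℝ i).eval a * x ^ (a - i)) *
        ((-1) ^ (n - i) * Real.exp (-x)) := by
  rw [iteratedDeriv_fun_mul (contDiffAt_rpow_const (Or.inl hx.ne')) (by fun_prop)]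
  simp only [Real.iteratedDeriv_exp_neg, iteratedDeriv_eq_iterate, Real.iter_deriv_rpow_const]

lemma complConfluent_eq_sum (c : ℝ) (l n : ℕ) {x : ℝ} (hx : 0 < x) :
    complConfluent c l n x =
      ∑ i ∈ range (n + 1), n.choose i * (descPochhammer ℝ i).eval (c - 1 + l) * (-x) ^ (n - i) := by
  rw [complConfluent, Real.iteratedDeriv_rpow_mul_exp_neg _ _ hx, mul_sum]
  refine sum_congr rfl fun i hi => ?_
  have hin : i ≤ n := Nat.lt_succ_iff.mp (mem_range.mp hi)
  have hpow : x ^ (1 - c + n - l) * x ^ (c - 1 + l - i) = x ^ (n - i) := by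
    rw [← Real.rpow_add hx, ← Real.rpow_natCast, Nat.cast_sub hin]
    ring_nf
  have hexp : Real.exp x * Real.exp (-x) = 1 := by
    rw [← Real.exp_add, add_neg_cancel, Real.exp_zero]
  rw [neg_pow x, ← hpow]
  linear_combination (n.choose i * (descPochhammer ℝ i).eval (c - 1 + l) * (-1) ^ (n - i) *
    x ^ (1 - c + n - l) * x ^ (c - 1 + l - i)) * hexp

noncomputable def complConfluentEGF (c : ℝ) (l : ℕ) (x : ℝ) : ℝ⟦X⟧ :=
  mk fun n => complConfluent c l n x / n !

lemma complConfluentEGF_eq (c : ℝ) (l : ℕ) {x : ℝ} (hx : 0 < x) :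
    complConfluentEGF c l x = PowerSeries.binomialSeries ℝ (c - 1 + l) * rescale (-x) (exp ℝ) := by
  ext n
  rw [complConfluentEGF, coeff_mk, coeff_mul, Nat.sum_antidiagonal_eq_sum_range_succ_mk,
    complConfluent_eq_sum c l n hx, sum_div]
  refine sum_congr rfl fun i hi => ?_
  have hin : i ≤ n := Nat.lt_succ_iff.mp (mem_range.mp hi)
  simp only [binomialSeries_coeff, coeff_rescale, coeff_exp,
    Ring.choose_eq_descPochhammer_eval_div, Nat.cast_choose ℝ hin, smul_eq_mul, map_div₀, map_one,
    map_natCast]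
  field_simp

lemma complConfluentEGF_add (c : ℝ) (l₁ l₂ : ℕ) {x₁ x₂ : ℝ} (hx₁ : 0 < x₁) (hx₂ : 0 < x₂) :
    complConfluentEGF c (l₁ + l₂) (x₁ + x₂) =
      complConfluentEGF c l₁ x₁ *
        (complConfluentEGF c l₂ x₂ * PowerSeries.binomialSeries ℝ (1 - c)) := by
  have hparam : c - 1 + ((l₁ + l₂ : ℕ) : ℝ) = (c - 1 + l₁) + ((c - 1 + l₂) + (1 - c)) := by
    push_cast; ring
  rw [complConfluentEGF_eq c _ (add_pos hx₁ hx₂), complConfluentEGF_eq c _ hx₁,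
    complConfluentEGF_eq c _ hx₂, hparam, binomialSeries_add (c - 1 + l₁),
    binomialSeries_add (c - 1 + l₂), neg_add, ← exp_mul_exp_eq_exp_add]
  ring

lemma PowerSeries.coeff_mul_mul_eq_sum_range {R : Type*} [Semiring R] (f g h : R⟦X⟧) (n : ℕ) :
    coeff n (f * (g * h)) = ∑ i ∈ range (n + 1), ∑ j ∈ range (n + 1 - i),
      coeff i f * (coeff j g * coeff (n - i - j) h) := by
  rw [coeff_mul, Nat.sum_antidiagonal_eq_sum_range_succ_mk]
  refine sum_congr rfl fun i hi => ?_
  rw [coeff_mul, Nat.sum_antidiagonal_eq_sum_range_succ_mk, mul_sum,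
    Nat.succ_eq_add_one, ← Nat.sub_add_comm (Nat.lt_succ_iff.mp (mem_range.mp hi))]

theorem complConfluent_full_addition (c : ℝ) (l₁ l₂ ν : ℕ) (x₁ x₂ : ℝ) (hx₁ : 0 < x₁)
    (hx₂ : 0 < x₂) :
    complConfluent c (l₁ + l₂) ν (x₁ + x₂)
      = ∑ ν₁ ∈ Finset.range (ν + 1), ∑ ν₂ ∈ Finset.range (ν + 1 - ν₁),
          genBinom (1 - c) (ν - ν₁ - ν₂)
            * ((Nat.factorial ν : ℝ) / ((Nat.factorial ν₁ : ℝ) * (Nat.factorial ν₂ : ℝ)))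
            * complConfluent c l₁ ν₁ x₁ * complConfluent c l₂ ν₂ x₂ := by
  have hcoeff := congrArg (coeff ν) (complConfluentEGF_add c l₁ l₂ hx₁ hx₂)
  simp only [coeff_mul_mul_eq_sum_range, complConfluentEGF, coeff_mk, binomialSeries_coeff,
    ← genBinom_eq_choose, smul_eq_mul, mul_one] at hcoeff
  rw [div_eq_iff (by positivity)] at hcoeff
  rw [hcoeff, sum_mul]
  refine sum_congr rfl fun ν₁ _ => ?_
  rw [sum_mul]
  refine sum_congr rfl fun ν₂ _ => ?_
  field_simp
end

section
/- Fix real parameters a, b, c and natural numbers l and ν. For every real x with 0 < x < 1, the complementary polynomial of the hypergeometric equation satisfies the hypergeometric-type ordinary differential equation x(1−x)·(d²/dx²)𝒫_ν(x,l) + [(l−ν)(1−2x) + c − (a+b+1)x]·(d/dx)𝒫_ν(x,l) + ν(2l−ν+a+b)·𝒫_ν(x,l) = 0, where l−ν and 2l−ν are taken as integers; equivalently, 𝒫_ν(·,l) satisfies the hypergeometric equation with parameters A = −ν, B = 2l−ν+a+b, C = l−ν+c. -/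
/-!
With `p = c - 1 + l` and `q = l + a + b - c`, the weight `w = t^p (1-t)^q` satisfies the Pearson
equation `x(1-x) w' = (p - (p+q)x) w`. Differentiating it `ν + 1` times shows that `w^(ν)` solves
the hypergeometric equation with parameters `(ν+1, ν-p-q, ν+1-p)`. The gauge transformation
`y ↦ x^(C-1) (1-x)^(A+B-C) y` maps solutions with parameters `(A, B, C)` to solutions with
parameters `(1-A, 1-B, 2-C)`, and applied to `w^(ν)` it produces `𝒫_ν(·,l)` with parameters
`(-ν, 2l-ν+a+b, l-ν+c)`.
-/

open Set
open scoped ContDiff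

/-- Complementary polynomial of the hypergeometric equation:
`𝒫_ν(x,l) = x^(ν+1-c-l) (1-x)^(ν-l+c-a-b) (dᵛ/dtᵛ)(t^(c-1+l)(1-t)^(l+a+b-c)) |_{t=x}`
(rpow powers). -/
noncomputable def complHypergeom (a b c : ℝ) (l ν : ℕ) (x : ℝ) : ℝ :=
  x ^ ((ν : ℝ) + 1 - c - (l : ℝ)) * (1 - x) ^ ((ν : ℝ) - (l : ℝ) + c - a - b) *
    iteratedDeriv ν
      (fun t : ℝ => t ^ (c - 1 + (l : ℝ)) * (1 - t) ^ ((l : ℝ) + a + b - c)) x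

section IteratedDeriv

variable {𝕜 F : Type*} [NontriviallyNormedField 𝕜] [NormedAddCommGroup F] [NormedSpace 𝕜 F]

theorem iteratedDeriv_iteratedDeriv (m n : ℕ) (f : 𝕜 → F) :
    iteratedDeriv m (iteratedDeriv n f) = iteratedDeriv (n + m) f := by
  simp only [iteratedDeriv_eq_iterate, ← Function.iterate_add_apply, add_comm]

theorem ContDiffOn.iteratedDeriv_of_isOpen {f : 𝕜 → F} {U : Set 𝕜} (hf : ContDiffOn 𝕜 ∞ f U)
    (hU : IsOpen U) (n : ℕ) : ContDiffOn 𝕜 ∞ (iteratedDeriv n f) U := by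
  induction n with
  | zero => simpa
  | succ n ih => simpa [iteratedDeriv_succ] using ih.deriv_of_isOpen hU le_rfl

theorem ContDiffOn.hasDerivAt_iteratedDeriv {f : 𝕜 → F} {U : Set 𝕜} (hf : ContDiffOn 𝕜 ∞ f U)
    (hU : IsOpen U) (n : ℕ) {x : 𝕜} (hx : x ∈ U) :
    HasDerivAt (iteratedDeriv n f) (iteratedDeriv (n + 1) f x) x := by
  rw [iteratedDeriv_succ]
  exact (((hf.iteratedDeriv_of_isOpen hU n).differentiableOn (by simp)).differentiableAt
    (hU.mem_nhds hx)).hasDerivAt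

theorem HasDerivAt.eq_zero_of_eventuallyEq_zero {G : 𝕜 → F} {D : F} {x : 𝕜}
    (hG : HasDerivAt G D x) (h : G =ᶠ[nhds x] 0) : D = 0 :=
  hG.unique ((hasDerivAt_const x 0).congr_of_eventuallyEq h)

end IteratedDeriv

theorem iteratedDeriv_two_mul_of_contDiffOn {f g : ℝ → ℝ} {U : Set ℝ} (hU : IsOpen U)
    (hf : ContDiffOn ℝ 2 f U) (hg : ContDiffOn ℝ 2 g U) {x : ℝ} (hx : x ∈ U) :
    iteratedDeriv 2 (f * g) x
      = iteratedDeriv 2 f x * g x + 2 * deriv f x * deriv g x + f x * iteratedDeriv 2 g x := by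
  simp only [← iteratedDerivWithin_of_isOpen hU hx, ← derivWithin_of_isOpen hU hx,
    iteratedDerivWithin_mul hx hU.uniqueDiffOn (hf x hx) (hg x hx), Finset.sum_range_succ,
    Finset.sum_range_zero, iteratedDerivWithin_zero, iteratedDerivWithin_one]
  norm_num
  ring

noncomputable def jacobiWeight (p q t : ℝ) : ℝ := t ^ p * (1 - t) ^ q

theorem contDiffOn_jacobiWeight (p q : ℝ) : ContDiffOn ℝ ∞ (jacobiWeight p q) {0, 1}ᶜ := by
  intro x hx
  simp only [mem_compl_iff, mem_insert_iff, mem_singleton_iff, not_or] at hx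
  exact ((Real.contDiffAt_rpow_const_of_ne hx.1).mul
    ((Real.contDiffAt_rpow_const_of_ne (sub_ne_zero.2 (Ne.symm hx.2))).comp x
      (contDiffAt_const.sub contDiffAt_id))).contDiffWithinAt

theorem jacobiWeight_pearson (p q : ℝ) {x : ℝ} (hx : x ∈ ({0, 1}ᶜ : Set ℝ)) :
    x * (1 - x) * deriv (jacobiWeight p q) x = (p - (p + q) * x) * jacobiWeight p q x := by
  simp only [mem_compl_iff, mem_insert_iff, mem_singleton_iff, not_or] at hx
  obtain ⟨hx0, hx1⟩ := hx
  have h1x : 1 - x ≠ 0 := sub_ne_zero.2 (Ne.symm hx1)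
  have hderiv : HasDerivAt (jacobiWeight p q)
      (p * x ^ (p - 1) * (1 - x) ^ q + x ^ p * (-1 * q * (1 - x) ^ (q - 1))) x :=
    (Real.hasDerivAt_rpow_const (Or.inl hx0)).mul
      (((hasDerivAt_id x).const_sub 1).rpow_const (Or.inl h1x))
  rw [hderiv.deriv, jacobiWeight, Real.rpow_sub_one hx0, Real.rpow_sub_one h1x]
  field_simp
  ring

def IsHypergeometricSolutionOn (A B C : ℝ) (y : ℝ → ℝ) (U : Set ℝ) : Prop :=
  ContDiffOn ℝ 2 y U ∧ ∀ x ∈ U,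
    x * (1 - x) * iteratedDeriv 2 y x + (C - (A + B + 1) * x) * deriv y x - A * B * y x = 0

theorem isHypergeometricSolutionOn_iteratedDeriv {F : ℝ → ℝ} {U : Set ℝ} {p q : ℝ}
    (hF : ContDiffOn ℝ ∞ F U) (hU : IsOpen U)
    (hpearson : ∀ x ∈ U, x * (1 - x) * deriv F x = (p - (p + q) * x) * F x) (n : ℕ) :
    IsHypergeometricSolutionOn (n + 1) (n - p - q) (n + 1 - p) (iteratedDeriv n F) U := by
  refine ⟨(hF.iteratedDeriv_of_isOpen hU n).of_le (WithTop.coe_le_coe.2 le_top), ?_⟩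
  have hd := hF.hasDerivAt_iteratedDeriv hU
  have hvanish {G : ℝ → ℝ} {D x : ℝ} (hG : HasDerivAt G D x) (hx : x ∈ U)
      (h0 : ∀ y ∈ U, G y = 0) : D = 0 :=
    hG.eq_zero_of_eventuallyEq_zero (Filter.eventually_of_mem (hU.mem_nhds hx) h0)
  rw [← iteratedDeriv_succ, iteratedDeriv_iteratedDeriv]
  induction n with
  | zero =>
    intro x hx
    have hD := hvanish ((((hasDerivAt_id' x).fun_mul ((hasDerivAt_id' x).const_sub 1)).fun_mul
      (hd 1 hx)).fun_sub ((((hasDerivAt_id' x).const_mul (p + q)).const_sub p).fun_mul (hd 0 hx)))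
      hx (fun y hy => by simpa [iteratedDeriv_one, sub_eq_zero] using hpearson y hy)
    push_cast
    linear_combination hD
  | succ n ih =>
    intro x hx
    have hD := hvanish (((((hasDerivAt_id' x).fun_mul ((hasDerivAt_id' x).const_sub 1)).fun_mul
      (hd (n + 2) hx : HasDerivAt _ (iteratedDeriv (n + 1 + 2) F x) x)).fun_add
      ((((hasDerivAt_id' x).const_mul (n + 1 + (n - p - q) + 1)).const_sub (n + 1 - p)).fun_mul
        (hd (n + 1) hx))).fun_sub ((hd n hx).const_mul ((n + 1) * (n - p - q)))) hx ih
    push_cast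
    linear_combination hD

theorem IsHypergeometricSolutionOn.jacobiWeight_mul {A B C : ℝ} {y : ℝ → ℝ} {U : Set ℝ}
    (hy : IsHypergeometricSolutionOn A B C y U) (hU : IsOpen U) (hU01 : U ⊆ {0, 1}ᶜ) :
    IsHypergeometricSolutionOn (1 - A) (1 - B) (2 - C)
      (jacobiWeight (C - 1) (A + B - C) * y) U := by
  set w := jacobiWeight (C - 1) (A + B - C)
  have hw : ContDiffOn ℝ ∞ w U := (contDiffOn_jacobiWeight _ _).mono hU01
  -- the case `n = 0` of the previous lemma supplies the second derivative of the weight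
  have hw2 := isHypergeometricSolutionOn_iteratedDeriv hw hU
    (fun x hx => jacobiWeight_pearson _ _ (hU01 hx)) 0
  simp only [iteratedDeriv_zero] at hw2
  refine ⟨hw2.1.mul hy.1, fun x hx => ?_⟩
  have hwx : DifferentiableAt ℝ w x :=
    (hw.differentiableOn (by simp)).differentiableAt (hU.mem_nhds hx)
  have hyx : DifferentiableAt ℝ y x :=
    (hy.1.differentiableOn (by simp)).differentiableAt (hU.mem_nhds hx)
  rw [iteratedDeriv_two_mul_of_contDiffOn hU hw2.1 hy.1 hx, deriv_mul hwx hyx, Pi.mul_apply]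
  linear_combination y x * hw2.2 x hx + w x * hy.2 x hx
    + 2 * deriv y x * jacobiWeight_pearson (C - 1) (A + B - C) (hU01 hx)

/-- The complementary polynomials satisfy the hypergeometric equation with
parameters `A = -ν`, `B = 2l-ν+a+b`, `C = l-ν+c`. -/
theorem complHypergeom_ode (a b c : ℝ) (l ν : ℕ) (x : ℝ) (hx0 : 0 < x) (hx1 : x < 1) :
    x * (1 - x) * iteratedDeriv 2 (fun t => complHypergeom a b c l ν t) x
      + ((((l : ℤ) - (ν : ℤ) : ℤ) : ℝ) * (1 - 2 * x) + c - (a + b + 1) * x)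
          * deriv (fun t => complHypergeom a b c l ν t) x
      + (ν : ℝ) * (((2 * (l : ℤ) - (ν : ℤ) : ℤ) : ℝ) + a + b)
          * complHypergeom a b c l ν x = 0 := by
  set p := c - 1 + (l : ℝ)
  set q := (l : ℝ) + a + b - c
  have hU : IsOpen ({0, 1}ᶜ : Set ℝ) := (Set.toFinite _).isClosed.isOpen_compl
  have hsol := (isHypergeometricSolutionOn_iteratedDeriv (contDiffOn_jacobiWeight p q) hU
    (fun _ => jacobiWeight_pearson p q) ν).jacobiWeight_mul hU subset_rfl
  have hP : (fun t => complHypergeom a b c l ν t) = jacobiWeight (ν + 1 - p - 1)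
      (ν + 1 + (ν - p - q) - (ν + 1 - p)) * iteratedDeriv ν (jacobiWeight p q) := by
    funext t
    simp only [complHypergeom, jacobiWeight, Pi.mul_apply]
    congr 3 <;> ring
  have h := hsol.2 x (by simp [hx0.ne', hx1.ne])
  rw [← hP] at h
  push_cast
  linear_combination h
end
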